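/- Let ℓ ≥ 0 be an integer and P_ℓ the Legendre polynomial of degree ℓ. Then for all real x: P_ℓ(x) = ℓ!·Σ_{q=0}^{⌊ℓ/2⌋} ((x²-1)^q · x^{ℓ-2q}) / (4^q·(ℓ-2q)!·(q!)²). -/

import Mathlib

/-- The Legendre polynomial of degree `ℓ`, via Rodrigues' formula
`P_ℓ = (1/(2^ℓ ℓ!)) (d/dx)^ℓ (x²-1)^ℓ`. -/
noncomputable def legendre (ℓ : ℕ) : Polynomial ℝ :=
  Polynomial.C (1 / ((2 : ℝ) ^ ℓ * Nat.factorial ℓ)) *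
    Polynomial.derivative^[ℓ] ((Polynomial.X ^ 2 - 1) ^ ℓ)

/-!
The `ℓ`-th derivative of `f = (X² - 1)^ℓ` at `x` is `ℓ!` times the coefficient of `h^ℓ` in
`f(x + h) = (h² + 2x·h + (x² - 1))^ℓ`. Expanding this trinomial power, a term
`(x² - 1)^a (2x·h)^b (h²)^c` with `a + b + c = ℓ` has degree `ℓ` in `h` exactly when
`b + 2c = ℓ`, i.e. `a = c = q` and `b = ℓ - 2q`; its multiplicity is `ℓ! / (q!² (ℓ - 2q)!)`.
-/

open Polynomial Finset Nat

theorem Nat.choose_mul_choose_sub_mul_factorial_mul_factorial_mul_factorial {n q : ℕ}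
    (h : 2 * q ≤ n) : n.choose q * (n - q).choose q * q ! * q ! * (n - 2 * q)! = n ! := by
  calc n.choose q * (n - q).choose q * q ! * q ! * (n - 2 * q)!
      = n.choose q * q ! * ((n - q).choose q * q ! * (n - q - q)!) := by
        rw [show n - q - q = n - 2 * q by omega]; ring
    _ = n ! := by
      rw [choose_mul_factorial_mul_factorial (by omega),
        choose_mul_factorial_mul_factorial (by omega)]

namespace Polynomial

theorem eval_iterate_derivative_eq_factorial_mul_coeff_taylor {R : Type*} [Semiring R]
    (f : R[X]) (r : R) (n : ℕ) : (derivative^[n] f).eval r = n ! * (taylor r f).coeff n := by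
  rw [taylor_coeff, ← factorial_smul_hasseDeriv, LinearMap.smul_apply, eval_smul, nsmul_eq_mul]

theorem taylor_X_sq_sub_one {R : Type*} [CommRing R] (r : R) :
    taylor r (X ^ 2 - 1) = X ^ 2 + C (2 * r) * X + C (r ^ 2 - 1) := by
  rw [taylor_apply]
  simp only [sub_comp, pow_comp, X_comp, one_comp, map_sub, map_mul, map_pow, map_one, map_ofNat]
  ring

theorem coeff_self_pow_X_sq_add_C_mul_X_add_C {R : Type*} [CommSemiring R] (a b : R) (n : ℕ) :
    ((X ^ 2 + C b * X + C a) ^ n).coeff n =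
      ∑ q ∈ range (n / 2 + 1),
        ((n.choose q * (n - q).choose q : ℕ) : R) * a ^ q * b ^ (n - 2 * q) := by
  have hsplit : (X ^ 2 + C b * X + C a : R[X]) = X * (X + C b) + C a := by ring
  have hterm : ∀ q ≤ n, ((X * (X + C b)) ^ (n - q) * C a ^ (n - (n - q)) *
      (n.choose (n - q) : R[X])).coeff n =
        ((n.choose q * (n - q).choose q : ℕ) : R) * a ^ q * b ^ (n - 2 * q) := by
    intro q hq
    rw [mul_pow, ← C_pow, ← C_eq_natCast, mul_assoc, ← C_mul, coeff_mul_C, mul_assoc,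
      coeff_X_pow_mul', if_pos (by omega), coeff_X_add_C_pow, Nat.sub_sub_self hq,
      choose_symm hq, show n - q - q = n - 2 * q by omega]
    push_cast
    ring
  rw [hsplit, add_pow, finsetSum_coeff, ← sum_range_reflect]
  symm
  refine sum_subset (range_subset_range.mpr (by omega)) (fun q hq hq' => ?_) |>.trans
    (sum_congr rfl fun q hq => ?_)
  · simp only [mem_range] at hq hq'
    rw [choose_eq_zero_of_lt (by omega : n - q < q)]
    simp
  · rw [add_tsub_cancel_right, hterm q (by simpa [Nat.lt_succ_iff] using hq)]

end Polynomial

/-- New development of the Legendre polynomial: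
`P_ℓ(x) = ℓ! Σ_{q=0}^{⌊ℓ/2⌋} (x²-1)^q x^{ℓ-2q} / (4^q (ℓ-2q)! (q!)²)`. -/
theorem legendre_explicit (ℓ : ℕ) (x : ℝ) :
    (legendre ℓ).eval x
      = (Nat.factorial ℓ : ℝ) *
          ∑ q ∈ Finset.Icc 0 (ℓ / 2),
            (x ^ 2 - 1) ^ q * x ^ (ℓ - 2 * q) /
              ((4 : ℝ) ^ q * (Nat.factorial (ℓ - 2 * q) : ℝ) * (Nat.factorial q : ℝ) ^ 2) := by
  rw [legendre, eval_mul, eval_C, eval_iterate_derivative_eq_factorial_mul_coeff_taylor,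
    taylor_pow, taylor_X_sq_sub_one, coeff_self_pow_X_sq_add_C_mul_X_add_C,
    ← range_succ_eq_Icc_zero, mul_sum, mul_sum, mul_sum]
  refine sum_congr rfl fun q hq => ?_
  have h2q : 2 * q ≤ ℓ := by simp only [mem_range] at hq; omega
  have hfact : ((ℓ.choose q * (ℓ - q).choose q : ℕ) : ℝ) * q ! * q ! * (ℓ - 2 * q)! = ℓ ! := by
    exact_mod_cast choose_mul_choose_sub_mul_factorial_mul_factorial_mul_factorial h2q
  generalize ((ℓ.choose q * (ℓ - q).choose q : ℕ) : ℝ) = c at hfact ⊢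
  have h2pow : (2 : ℝ) ^ ℓ = 4 ^ q * 2 ^ (ℓ - 2 * q) := by
    rw [show (4 : ℝ) = 2 ^ 2 by norm_num, ← pow_mul, ← pow_add, Nat.add_sub_cancel' h2q]
  rw [h2pow]
  field_simp
  rw [← hfact]
  ring
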